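/- Let F = F_{2^m} be a finite field of characteristic 2 and let f : F → F be the map f(T) = T² + T. For α, β ∈ F, the 4-dimensional commutative non-unital associative F-algebras B_{4,1}^α and B_{4,1}^β, with basis a, b, c, d and nonzero products a² = c, ab = ba = c + αd (resp. c + βd), b² = d, are isomorphic if and only if α + β lies in the image of f. The image of f is an F₂-subspace of F of cardinality 2^{m−1}, so there are exactly two isomorphism classes among the algebras B_{4,1}^α, α ∈ F. -/

import Mathlib

/-!
In characteristic 2 the Artin–Schreier map `℘ T = T² + T` is additive with kernel `𝔽₂`, so its
image has index 2 in `F`.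

In `B_{4,1}^β` a product `x y` depends only on the `a`- and `b`-coordinates of `x` and `y`, and
`x² = x_a² c + x_b² d`. If `t² + t = α + β`, the map `a ↦ a + t b`, `b ↦ b`, `c ↦ c + t² d`,
`d ↦ d` is an isomorphism `B_{4,1}^α → B_{4,1}^β`. Conversely, let `e` be an isomorphism and
`(a₀, a₁)`, `(b₀, b₁)` the leading coordinates of `e a`, `e b`. Applying `e` to `ab = a² + α b²`
shows that the form `x² + xy + αy²` is similar to `D (x² + xy + βy²)` with
`D = a₀b₁ + a₁b₀ ≠ 0`, and equality of Arf invariants gives `α + β ∈ ℘ F`.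
-/

/-- The multiplication table of `B_{4,1}^α` on a basis `a = v 0`, `b = v 1`, `c = v 2`,
`d = v 3`: `a² = c`, `ab = ba = c + αd`, `b² = d`, all other products of basis elements
zero. -/
def IsB41Basis {F A : Type*} [Field F] [NonUnitalRing A] [Module F A]
    (α : F) (v : Module.Basis (Fin 4) F A) : Prop :=
  v 0 * v 0 = v 2 ∧ v 0 * v 1 = v 2 + α • v 3 ∧ v 1 * v 0 = v 2 + α • v 3 ∧
  v 1 * v 1 = v 3 ∧
  v 0 * v 2 = 0 ∧ v 0 * v 3 = 0 ∧ v 1 * v 2 = 0 ∧ v 1 * v 3 = 0 ∧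
  v 2 * v 0 = 0 ∧ v 2 * v 1 = 0 ∧ v 2 * v 2 = 0 ∧ v 2 * v 3 = 0 ∧
  v 3 * v 0 = 0 ∧ v 3 * v 1 = 0 ∧ v 3 * v 2 = 0 ∧ v 3 * v 3 = 0

def artinSchreier (R : Type*) [CommRing R] [CharP R 2] : R →+ R :=
  AddMonoidHom.mk' (fun T => T ^ 2 + T) fun a b => by rw [CharTwo.add_sq]; ring

section ArtinSchreier

variable {R : Type*} [CommRing R] [CharP R 2]

@[simp]
theorem artinSchreier_apply (T : R) : artinSchreier R T = T ^ 2 + T := rfl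

theorem coe_range_artinSchreier :
    ((artinSchreier R).range : Set R) = Set.range fun T : R => T ^ 2 + T :=
  AddMonoidHom.coe_range _

variable [IsDomain R]

theorem mem_ker_artinSchreier {T : R} : T ∈ (artinSchreier R).ker ↔ T = 0 ∨ T = 1 := by
  rw [AddMonoidHom.mem_ker, artinSchreier_apply, show T ^ 2 + T = T * (T + 1) by ring,
    mul_eq_zero, add_eq_zero_iff_eq_neg, CharTwo.neg_eq]

theorem card_ker_artinSchreier : Nat.card (artinSchreier R).ker = 2 := by
  have : ((artinSchreier R).ker : Set R) = {0, 1} := Set.ext fun _ => mem_ker_artinSchreier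
  rw [← SetLike.coe_sort_coe, this, Nat.card_coe_set_eq, Set.ncard_pair zero_ne_one]

theorem index_range_artinSchreier [Finite R] : (artinSchreier R).range.index = 2 := by
  have hcard := (artinSchreier R).ker.card_mul_index
  rw [AddSubgroup.index_ker, card_ker_artinSchreier,
    ← (artinSchreier R).range.card_mul_index] at hcard
  exact Nat.eq_of_mul_eq_mul_left (Nat.card_pos (α := (artinSchreier R).range)) (by linarith)

theorem two_mul_card_range_artinSchreier [Finite R] :
    2 * Nat.card (artinSchreier R).range = Nat.card R := by
  rw [← index_range_artinSchreier (R := R), mul_comm, AddSubgroup.card_mul_index]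

end ArtinSchreier

theorem card_quot_add_mem {G : Type*} [AddCommGroup G] (H : AddSubgroup G)
    (hG : ∀ x : G, -x = x) :
    Nat.card (Quot fun x y : G => x + y ∈ H) = H.index :=
  Nat.card_congr (Quot.congrRight fun x y => by rw [QuotientAddGroup.leftRel_apply, hG])

theorem LinearIndependent.pair {ι R M : Type*} [Semiring R] [AddCommMonoid M] [Module R M]
    {b : ι → M} (hb : LinearIndependent R b) {i j : ι} (hij : i ≠ j) :
    LinearIndependent R ![b i, b j] := by
  convert hb.comp ![i, j] ?_ using 1
  · ext k; fin_cases k <;> rfl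
  · intro k l; fin_cases k <;> fin_cases l <;> simp [hij, hij.symm]

/-- With `q x y = x² + x y + α y²` and `D = a₀ b₁ + a₁ b₀`, the hypotheses say
`q a₀ b₀ = D` and `q a₁ b₁ = β D` in characteristic 2. The witness is `N / D`, where `N` is the
value at `(a₀, b₀), (a₁, b₁)` of the bilinear form `x₀ y₀ + x₁ y₀ + α x₁ y₁` whose diagonal
is `q`. -/
theorem add_mem_range_sq_add_self_of_forms {F : Type*} [Field F] [CharP F 2]
    {α β a₀ a₁ b₀ b₁ : F} (hD : a₀ * b₁ + a₁ * b₀ ≠ 0)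
    (h₀ : a₀ * b₀ + (a₀ * b₁ + a₁ * b₀) = a₀ ^ 2 + α * b₀ ^ 2)
    (h₁ : β * (a₀ * b₁ + a₁ * b₀) + a₁ * b₁ = a₁ ^ 2 + α * b₁ ^ 2) :
    α + β ∈ Set.range fun T : F => T ^ 2 + T := by
  have key : (a₀ * a₁ + a₁ * b₀ + α * b₀ * b₁) ^ 2
      + (a₀ * a₁ + a₁ * b₀ + α * b₀ * b₁) * (a₀ * b₁ + a₁ * b₀)
      = (α + β) * (a₀ * b₁ + a₁ * b₀) ^ 2 := by
    linear_combination (norm := (ring_nf; reduce_mod_char!))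
      (a₁ ^ 2 + a₁ * b₁ + α * b₁ ^ 2) * h₀ + (a₀ * b₁ + a₁ * b₀) * h₁
  refine ⟨(a₀ * a₁ + a₁ * b₀ + α * b₀ * b₁) / (a₀ * b₁ + a₁ * b₀), ?_⟩
  field_simp
  linear_combination key

namespace IsB41Basis

variable {F A B : Type*} [Field F] [NonUnitalRing A] [Module F A] [NonUnitalRing B] [Module F B]
  {α β : F} {v : Module.Basis (Fin 4) F A} {w : Module.Basis (Fin 4) F B}

theorem mul_eq [SMulCommClass F A A] [IsScalarTower F A A] (hv : IsB41Basis α v) (x y : A) :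
    x * y =
      (v.repr x 0 * v.repr y 0 + (v.repr x 0 * v.repr y 1 + v.repr x 1 * v.repr y 0)) • v 2 +
        (α * (v.repr x 0 * v.repr y 1 + v.repr x 1 * v.repr y 0) + v.repr x 1 * v.repr y 1) •
          v 3 := by
  obtain ⟨h00, h01, h10, h11, h02, h03, h12, h13, h20, h21, h22, h23, h30, h31, h32, h33⟩ := hv
  conv_lhs => rw [← v.sum_repr x, ← v.sum_repr y]
  simp only [Fin.sum_univ_four, mul_add, add_mul, smul_mul_assoc, mul_smul_comm, h00, h01, h10,
    h11, h02, h03, h12, h13, h20, h21, h22, h23, h30, h31, h32, h33, smul_zero, add_zero,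
    smul_add, smul_smul]
  match_scalars <;> ring

theorem mul_self_eq [SMulCommClass F A A] [IsScalarTower F A A] [CharP F 2]
    (hv : IsB41Basis α v) (x : A) :
    x * x = v.repr x 0 ^ 2 • v 2 + v.repr x 1 ^ 2 • v 3 := by
  rw [hv.mul_eq]
  match_scalars <;> ring_nf <;> reduce_mod_char!

theorem exists_mulEquiv_of_sq_add_self [SMulCommClass F A A] [IsScalarTower F A A]
    [SMulCommClass F B B] [IsScalarTower F B B] [CharP F 2]
    (hv : IsB41Basis α v) (hw : IsB41Basis β w) {t : F} (ht : t ^ 2 + t = α + β) :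
    ∃ e : A ≃ₗ[F] B, ∀ x y, e (x * y) = e x * e y := by
  let T : B ≃ₗ[F] B :=
    (LinearEquiv.transvection (f := t • w.coord 0) (v := w 1) (by simp)).trans
      (LinearEquiv.transvection (f := t ^ 2 • w.coord 2) (v := w 3) (by simp))
  let e := (v.equiv w (Equiv.refl _)).trans T
  have he_repr (x : A) :
      w.repr (e x) 0 = v.repr x 0 ∧ w.repr (e x) 1 = v.repr x 1 + t * v.repr x 0 := by
    simp [e, T, LinearMap.transvection.apply, Module.Basis.equiv]
  have he₂ : e (v 2) = w 2 + t ^ 2 • w 3 := by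
    simp [e, T, LinearMap.transvection.apply]
  have he₃ : e (v 3) = w 3 := by
    simp [e, T, LinearMap.transvection.apply]
  refine ⟨e, fun x y => ?_⟩
  rw [hv.mul_eq x y, map_add, map_smul, map_smul, he₂, he₃, hw.mul_eq, (he_repr x).1,
    (he_repr x).2, (he_repr y).1, (he_repr y).2]
  match_scalars
  · ring_nf; reduce_mod_char!
  · linear_combination (norm := (ring_nf; reduce_mod_char!))
      (v.repr x 0 * v.repr y 1 + v.repr x 1 * v.repr y 0) * ht

theorem add_mem_range_of_mulEquiv [SMulCommClass F B B] [IsScalarTower F B B] [CharP F 2]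
    (hv : IsB41Basis α v) (hw : IsB41Basis β w)
    (e : A ≃ₗ[F] B) (he : ∀ x y, e (x * y) = e x * e y) :
    α + β ∈ Set.range fun T : F => T ^ 2 + T := by
  set a₀ := w.repr (e (v 0)) 0
  set a₁ := w.repr (e (v 0)) 1
  set b₀ := w.repr (e (v 1)) 0
  set b₁ := w.repr (e (v 1)) 1
  have he₂ : e (v 2) = a₀ ^ 2 • w 2 + a₁ ^ 2 • w 3 := by rw [← hv.1, he, hw.mul_self_eq]
  have he₃ : e (v 3) = b₀ ^ 2 • w 2 + b₁ ^ 2 • w 3 := by rw [← hv.2.2.2.1, he, hw.mul_self_eq]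
  have hcoeff := (w.linearIndependent.pair (show (2 : Fin 4) ≠ 3 by decide)).eq_of_pair <|
    calc (a₀ * b₀ + (a₀ * b₁ + a₁ * b₀)) • w 2 + (β * (a₀ * b₁ + a₁ * b₀) + a₁ * b₁) • w 3
        = e (v 0 * v 1) := by rw [he, hw.mul_eq]
      _ = (a₀ ^ 2 + α * b₀ ^ 2) • w 2 + (a₁ ^ 2 + α * b₁ ^ 2) • w 3 := by
        rw [hv.2.1, map_add, map_smul, he₂, he₃]; module
  -- `e c` and `e d` are independent, and `D²` is the determinant of their coordinates.
  have hdet : a₀ ^ 2 * b₁ ^ 2 ≠ a₁ ^ 2 * b₀ ^ 2 := by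
    have := (v.linearIndependent.map' e.toLinearMap e.ker).pair (show (2 : Fin 4) ≠ 3 by decide)
    simp only [Function.comp_apply, LinearEquiv.coe_coe, he₂, he₃] at this
    exact (LinearIndependent.pair_add_smul_add_smul_iff _ _ _ _).mp this |>.2
  refine add_mem_range_sq_add_self_of_forms (fun hD => hdet ?_) hcoeff.1 hcoeff.2
  rw [CharTwo.add_eq_zero] at hD
  rw [← mul_pow, ← mul_pow, hD]

end IsB41Basis

/-- Over a finite field `F = F_{2^m}` of characteristic 2, with `f(T) = T² + T`:
the algebras `B_{4,1}^α` and `B_{4,1}^β` are isomorphic iff `α + β ∈ im f`;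
moreover `im f` is an `F₂`-subspace of `F` of cardinality `2^{m-1}` (i.e. of index 2),
so there are exactly two isomorphism classes among the `B_{4,1}^α`, `α ∈ F`. -/
theorem stmt17 {F : Type} [Field F] [Fintype F] (hchar : ringChar F = 2)
    {A B : Type*}
    [NonUnitalRing A] [Module F A] [SMulCommClass F A A] [IsScalarTower F A A]
    [NonUnitalRing B] [Module F B] [SMulCommClass F B B] [IsScalarTower F B B]
    (α β : F)
    (v : Module.Basis (Fin 4) F A) (w : Module.Basis (Fin 4) F B)
    (hv : IsB41Basis α v) (hw : IsB41Basis β w) :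
    ((∃ e : A ≃ₗ[F] B, ∀ x y : A, e (x * y) = e x * e y) ↔
        α + β ∈ Set.range (fun T : F => T ^ 2 + T)) ∧
    (0 : F) ∈ Set.range (fun T : F => T ^ 2 + T) ∧
    (∀ x ∈ Set.range (fun T : F => T ^ 2 + T), ∀ y ∈ Set.range (fun T : F => T ^ 2 + T),
        x + y ∈ Set.range (fun T : F => T ^ 2 + T)) ∧
    2 * Nat.card (Set.range (fun T : F => T ^ 2 + T)) = Fintype.card F ∧
    Nat.card (Quot (fun x y : F => x + y ∈ Set.range (fun T : F => T ^ 2 + T))) = 2 := by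
  have : CharP F 2 := ringChar.eq_iff.mp hchar
  have hrange := coe_range_artinSchreier (R := F)
  refine ⟨⟨fun ⟨e, he⟩ => hv.add_mem_range_of_mulEquiv hw e he,
    fun ⟨t, ht⟩ => hv.exists_mulEquiv_of_sq_add_self hw ht⟩, ⟨0, by simp⟩, ?_, ?_, ?_⟩
  · rw [← hrange]
    exact fun x hx y hy => add_mem hx hy
  · rw [← hrange, ← Nat.card_eq_fintype_card, SetLike.coe_sort_coe]
    exact two_mul_card_range_artinSchreier
  · rw [← hrange]
    exact (card_quot_add_mem _ CharTwo.neg_eq).trans index_range_artinSchreier
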